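/- Let Λ ≥ λ > 0, ω = Λ/λ, γ > 0. Define u^ω_γ on the square S = [-(1+√ω)π/2, (1+√ω)π/2]² piecewise by: u = γ·cos x + cos y if |x|,|y| ≤ π/2; u = -γ√ω·sin((|x|-π/2)/√ω) + cos y if π/2 < |x|, |y| ≤ π/2; u = γ·cos x - √ω·sin((|y|-π/2)/√ω) if |x| ≤ π/2 < |y|; u = -√ω·(γ·sin((|x|-π/2)/√ω) + sin((|y|-π/2)/√ω)) if π/2 < |x| and π/2 < |y|. Then u^ω_γ extends to a C² function on all of ℝ² which is periodic with period (1+√ω)·π in both x and y, and satisfies M⁺(D²u^ω_γ) + λ·u^ω_γ = 0 everywhere in ℝ². -/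

import Mathlib

open Real

noncomputable def pucci (lam Lam α β δ : ℝ) : ℝ :=
  (lam * min ((α + δ) / 2 + Real.sqrt (((α - δ) / 2) ^ 2 + β ^ 2)) 0
    + Lam * max ((α + δ) / 2 + Real.sqrt (((α - δ) / 2) ^ 2 + β ^ 2)) 0)
  + (lam * min ((α + δ) / 2 - Real.sqrt (((α - δ) / 2) ^ 2 + β ^ 2)) 0
    + Lam * max ((α + δ) / 2 - Real.sqrt (((α - δ) / 2) ^ 2 + β ^ 2)) 0)

noncomputable def pxx (u : ℝ → ℝ → ℝ) (x y : ℝ) : ℝ :=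
  deriv (fun t => deriv (fun s => u s y) t) x

noncomputable def pyy (u : ℝ → ℝ → ℝ) (x y : ℝ) : ℝ :=
  deriv (fun t => deriv (fun s => u x s) t) y

noncomputable def pxy (u : ℝ → ℝ → ℝ) (x y : ℝ) : ℝ :=
  deriv (fun t => deriv (fun s => u s t) x) y

/-- The piecewise definition of `u^ω_γ` on the square `[-(1+√ω)π/2, (1+√ω)π/2]²`. -/
noncomputable def uPer (om ga x y : ℝ) : ℝ :=
  if |x| ≤ π / 2 then
    (if |y| ≤ π / 2 then ga * Real.cos x + Real.cos y
     else ga * Real.cos x - Real.sqrt om * Real.sin ((|y| - π / 2) / Real.sqrt om))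
  else
    (if |y| ≤ π / 2 then
      -(ga * Real.sqrt om) * Real.sin ((|x| - π / 2) / Real.sqrt om) + Real.cos y
     else
      -Real.sqrt om * (ga * Real.sin ((|x| - π / 2) / Real.sqrt om)
        + Real.sin ((|y| - π / 2) / Real.sqrt om)))

/-!
The extension is `γ f(x) + f(y)` for one `(1+√ω)π`-periodic profile `f` equal to `cos` on
`[-π/2, π/2]` and to `-√ω sin((t - π/2)/√ω)` on the rest of a period. The two pieces meet
at `±π/2` with equal values, slopes and (vanishing) second derivatives, so `f` is `C²`, and
`f'' = -f` where `f ≥ 0`, `f'' = -f/ω` where `f ≤ 0`; with `ω = Λ/λ` this is exactly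
`λ min(f'', 0) + Λ max(f'', 0) = -λ f`. The Hessian of `γ f(x) + f(y)` is diagonal, so `M⁺`
splits into this scalar operator in each variable, and `γ > 0` factors out of the first.
-/

open Set Filter Topology Function

theorem HasDerivAt.of_eventuallyEq_nhdsLE_nhdsGE {f g h : ℝ → ℝ} {d x : ℝ}
    (hg : HasDerivAt g d x) (hh : HasDerivAt h d x)
    (hfg : f =ᶠ[𝓝[≤] x] g) (hfh : f =ᶠ[𝓝[≥] x] h) : HasDerivAt f d x := by
  have hle := hg.hasDerivWithinAt.congr_of_eventuallyEq hfg
    (hfg.self_of_nhdsWithin (mem_Iic.2 le_rfl))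
  have hge := hh.hasDerivWithinAt.congr_of_eventuallyEq hfh
    (hfh.self_of_nhdsWithin (mem_Ici.2 le_rfl))
  simpa only [Iic_union_Ici, hasDerivWithinAt_univ] using hle.union hge

theorem Function.Periodic.hasDerivAt_of_mem_Ico {f f' : ℝ → ℝ} {p a : ℝ} (hp : 0 < p)
    (hf : Periodic f p) (hf' : Periodic f' p)
    (h : ∀ t ∈ Ico a (a + p), HasDerivAt f (f' t) t) (t : ℝ) : HasDerivAt f (f' t) t := by
  set n := toIcoDiv hp a t
  have hshift : (fun u => f (u - n • p)) = f := funext fun u => hf.sub_zsmul_eq n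
  have hder := h _ (toIcoMod_mem_Ico hp a t)
  rw [← self_sub_toIcoDiv_zsmul, hf'.sub_zsmul_eq] at hder
  rw [← hshift]
  exact hder.comp_sub_const t (n • p)

theorem contDiff_two_of_hasDerivAt {f f' f'' : ℝ → ℝ} (hf : ∀ t, HasDerivAt f (f' t) t)
    (hf' : ∀ t, HasDerivAt f' (f'' t) t) (hf'' : Continuous f'') : ContDiff ℝ 2 f := by
  have hC1 : ContDiff ℝ 1 f' := contDiff_one_iff_deriv.mpr
    ⟨fun t => (hf' t).differentiableAt, by rwa [funext fun t => (hf' t).deriv]⟩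
  exact contDiff_succ_iff_deriv (n := 1).mpr ⟨fun t => (hf t).differentiableAt, by simp,
    by rwa [funext fun t => (hf t).deriv]⟩

/-- The `p`-periodic function equal to `g` on `[a, b]` and to `h` on `[b, a + p]`, provided the
pieces agree at `b` and `g a = h (a + p)`. -/
noncomputable def periodicGlue (p a b : ℝ) (g h : ℝ → ℝ) (t : ℝ) : ℝ :=
  let r := a + Int.fract ((t - a) / p) * p
  if r ≤ b then g r else h r

section PeriodicGlue

variable {p a b : ℝ} {g h : ℝ → ℝ}

theorem periodicGlue_def (hp : 0 < p) (t : ℝ) : periodicGlue p a b g h t =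
    if toIcoMod hp a t ≤ b then g (toIcoMod hp a t) else h (toIcoMod hp a t) := by
  rw [toIcoMod_eq_add_fract_mul]; rfl

theorem periodic_periodicGlue (hp : 0 < p) : Periodic (periodicGlue p a b g h) p := by
  intro t
  simp only [periodicGlue_def hp, toIcoMod_add_right]

theorem periodicGlue_of_mem_Icc_left (hp : 0 < p) (hbp : b < a + p) {t : ℝ} (ht : t ∈ Icc a b) :
    periodicGlue p a b g h t = g t := by
  rw [periodicGlue_def hp, (toIcoMod_eq_self hp).mpr ⟨ht.1, ht.2.trans_lt hbp⟩, if_pos ht.2]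

theorem periodicGlue_of_mem_Icc_right (hp : 0 < p) (hab : a ≤ b) (hb : g b = h b)
    (ha : g a = h (a + p)) {t : ℝ} (ht : t ∈ Icc b (a + p)) :
    periodicGlue p a b g h t = h t := by
  rcases ht.2.lt_or_eq with htp | rfl
  · rw [periodicGlue_def hp, (toIcoMod_eq_self hp).mpr ⟨hab.trans ht.1, htp⟩]
    split_ifs with htb
    · rw [le_antisymm htb ht.1, hb]
    · rfl
  · rw [periodic_periodicGlue hp, periodicGlue_def hp,
      (toIcoMod_eq_self hp).mpr ⟨le_rfl, lt_add_of_pos_right a hp⟩, if_pos hab, ha]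

theorem periodicGlue_eq_comp (hp : 0 < p) {g₂ h₂ Φ : ℝ → ℝ}
    (hg : ∀ t ∈ Icc a b, g₂ t = Φ (g t)) (hh : ∀ t ∈ Ioo b (a + p), h₂ t = Φ (h t)) (t : ℝ) :
    periodicGlue p a b g₂ h₂ t = Φ (periodicGlue p a b g h t) := by
  have hr := toIcoMod_mem_Ico hp a t
  rw [periodicGlue_def hp, periodicGlue_def hp]
  split_ifs with hrb
  · exact hg _ ⟨hr.1, hrb⟩
  · exact hh _ ⟨not_le.mp hrb, hr.2⟩

theorem hasDerivAt_periodicGlue (hp : 0 < p) (hab : a < b) (hbp : b < a + p) {g' h' : ℝ → ℝ}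
    (hg : ∀ t, HasDerivAt g (g' t) t) (hh : ∀ t, HasDerivAt h (h' t) t)
    (hb : g b = h b) (ha : g a = h (a + p)) (hb' : g' b = h' b) (ha' : g' a = h' (a + p))
    (t : ℝ) : HasDerivAt (periodicGlue p a b g h) (periodicGlue p a b g' h' t) t := by
  refine (periodic_periodicGlue hp).hasDerivAt_of_mem_Ico (a := a) hp
    (periodic_periodicGlue hp) (fun t ht => ?_) t
  have hL : ∀ u ∈ Icc a b, periodicGlue p a b g h u = g u :=
    fun u => periodicGlue_of_mem_Icc_left hp hbp
  have hR : ∀ u ∈ Icc b (a + p), periodicGlue p a b g h u = h u :=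
    fun u => periodicGlue_of_mem_Icc_right hp hab.le hb ha
  rcases lt_trichotomy t b with htb | rfl | htb
  · rw [periodicGlue_of_mem_Icc_left hp hbp ⟨ht.1, htb.le⟩]
    rcases ht.1.eq_or_lt with rfl | hat
    · -- to the left of `a` the function is `h` translated by one period
      refine .of_eventuallyEq_nhdsLE_nhdsGE (((hh _).comp_add_const a p).congr_deriv ha'.symm)
        (hg a) ?_ ?_
      · filter_upwards [Icc_mem_nhdsLE (show b - p < a by linarith)] with u hu
        rw [← periodic_periodicGlue hp u]
        exact hR _ ⟨by linarith [hu.1], by linarith [hu.2]⟩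
      · filter_upwards [Icc_mem_nhdsGE htb] with u hu using hL u hu
    · refine (hg t).congr_of_eventuallyEq ?_
      filter_upwards [Ioo_mem_nhds hat htb] with u hu using hL u (Ioo_subset_Icc_self hu)
  · rw [periodicGlue_of_mem_Icc_left hp hbp ⟨hab.le, le_rfl⟩]
    refine .of_eventuallyEq_nhdsLE_nhdsGE (hg t) ((hh t).congr_deriv hb'.symm) ?_ ?_
    · filter_upwards [Icc_mem_nhdsLE hab] with u hu using hL u hu
    · filter_upwards [Icc_mem_nhdsGE hbp] with u hu using hR u hu
  · rw [periodicGlue_of_mem_Icc_right hp hab.le hb' ha' ⟨htb.le, ht.2.le⟩]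
    refine (hh t).congr_of_eventuallyEq ?_
    filter_upwards [Ioo_mem_nhds htb ht.2] with u hu using hR u (Ioo_subset_Icc_self hu)

end PeriodicGlue

section Profile

variable {s : ℝ}

noncomputable def profile (s : ℝ) : ℝ → ℝ :=
  periodicGlue ((1 + s) * π) (-(π / 2)) (π / 2) cos fun t => -s * sin ((t - π / 2) / s)

noncomputable def profileDeriv (s : ℝ) : ℝ → ℝ :=
  periodicGlue ((1 + s) * π) (-(π / 2)) (π / 2) (fun t => -sin t)
    fun t => -cos ((t - π / 2) / s)

noncomputable def profileDeriv2 (s : ℝ) : ℝ → ℝ :=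
  periodicGlue ((1 + s) * π) (-(π / 2)) (π / 2) (fun t => -cos t)
    fun t => sin ((t - π / 2) / s) / s

theorem profile_period_pos (hs : 0 < s) : 0 < (1 + s) * π := by positivity

theorem half_pi_lt_profile_period (hs : 0 < s) : π / 2 < -(π / 2) + (1 + s) * π := by
  nlinarith [pi_pos]

theorem profile_phase_end (hs : 0 < s) : (-(π / 2) + (1 + s) * π - π / 2) / s = π := by
  field_simp; ring

theorem hasDerivAt_profile (hs : 0 < s) (t : ℝ) :
    HasDerivAt (profile s) (profileDeriv s t) t := by
  refine hasDerivAt_periodicGlue (profile_period_pos hs) (by linarith [pi_pos])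
    (half_pi_lt_profile_period hs) hasDerivAt_cos (fun t => ?_) ?_ ?_ ?_ ?_ t
  · exact ((((hasDerivAt_id' t).sub_const (π / 2)).div_const s).sin.const_mul (-s)).congr_deriv
      (by field_simp)
  all_goals simp [profile_phase_end hs]

theorem hasDerivAt_profileDeriv (hs : 0 < s) (t : ℝ) :
    HasDerivAt (profileDeriv s) (profileDeriv2 s t) t := by
  refine hasDerivAt_periodicGlue (profile_period_pos hs) (by linarith [pi_pos])
    (half_pi_lt_profile_period hs) (fun t => (hasDerivAt_sin t).neg) (fun t => ?_) ?_ ?_ ?_ ?_ t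
  · exact (((hasDerivAt_id' t).sub_const (π / 2)).div_const s).cos.neg.congr_deriv (by ring)
  all_goals simp [profile_phase_end hs]

theorem profileDeriv2_eq (hs : 0 < s) (t : ℝ) :
    profileDeriv2 s t = -max (profile s t) 0 - min (profile s t) 0 / s ^ 2 := by
  refine periodicGlue_eq_comp (Φ := fun v => -max v 0 - min v 0 / s ^ 2)
    (profile_period_pos hs) (fun t ht => ?_) (fun t ht => ?_) t
  · simp [cos_nonneg_of_mem_Icc ht]
  · have hsin : 0 ≤ sin ((t - π / 2) / s) := by
      refine sin_nonneg_of_nonneg_of_le_pi (div_nonneg (by linarith [ht.1]) hs.le) ?_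
      exact (div_le_div_of_nonneg_right (by linarith [ht.2]) hs.le).trans
        (profile_phase_end hs).le
    have hneg : -s * sin ((t - π / 2) / s) ≤ 0 := by nlinarith
    simp only [max_eq_right hneg, min_eq_left hneg]
    field_simp
    ring

theorem contDiff_profile (hs : 0 < s) : ContDiff ℝ 2 (profile s) := by
  have hcont : Continuous (profile s) :=
    continuous_iff_continuousAt.mpr fun t => (hasDerivAt_profile hs t).continuousAt
  refine contDiff_two_of_hasDerivAt (hasDerivAt_profile hs) (hasDerivAt_profileDeriv hs) ?_
  rw [funext (profileDeriv2_eq hs)]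
  fun_prop

theorem periodic_profile (hs : 0 < s) : Function.Periodic (profile s) ((1 + s) * π) :=
  periodic_periodicGlue (profile_period_pos hs)

theorem profile_of_abs_le (hs : 0 < s) {t : ℝ} (ht : |t| ≤ (1 + s) * π / 2) :
    profile s t = if |t| ≤ π / 2 then cos t else -s * sin ((|t| - π / 2) / s) := by
  have hp := profile_period_pos hs
  have hbp := half_pi_lt_profile_period hs
  have hR : ∀ u ∈ Icc (π / 2) (-(π / 2) + (1 + s) * π),
      profile s u = -s * sin ((u - π / 2) / s) :=
    fun u => periodicGlue_of_mem_Icc_right hp (by linarith [pi_pos]) (by simp)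
      (by simp [profile_phase_end hs])
  split_ifs with hle
  · exact periodicGlue_of_mem_Icc_left hp hbp (abs_le.mp hle)
  rcases le_or_gt 0 t with h0 | h0
  · rw [abs_of_nonneg h0] at ht hle ⊢
    exact hR t ⟨by linarith, by linarith⟩
  · rw [abs_of_neg h0] at ht hle ⊢
    rw [← periodic_profile hs, hR _ ⟨by linarith, by linarith⟩,
      show (t + (1 + s) * π - π / 2) / s = -((-t - π / 2) / s) + π by field_simp; ring,
      sin_add_pi, sin_neg]
    ring

end Profile

section SecondDerivatives

variable {g h : ℝ → ℝ}

theorem pxx_add_separable (x y : ℝ) :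
    pxx (fun x y => g x + h y) x y = deriv (deriv g) x := by
  simp only [pxx, deriv_add_const]

theorem pyy_add_separable (x y : ℝ) :
    pyy (fun x y => g x + h y) x y = deriv (deriv h) y := by
  simp only [pyy, deriv_const_add]

theorem pxy_add_separable (x y : ℝ) : pxy (fun x y => g x + h y) x y = 0 := by
  simp only [pxy, deriv_add_const, deriv_const]

end SecondDerivatives

section Pucci

variable {lam Lam : ℝ}

noncomputable def pucciScalar (lam Lam a : ℝ) : ℝ := lam * min a 0 + Lam * max a 0

theorem pucci_diagonal (lam Lam a d : ℝ) :
    pucci lam Lam a 0 d = pucciScalar lam Lam a + pucciScalar lam Lam d := by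
  have hsqrt : √(((a - d) / 2) ^ 2 + 0 ^ 2) = |(a - d) / 2| := by
    rw [zero_pow two_ne_zero, add_zero, sqrt_sq_eq_abs]
  rw [pucci, hsqrt]
  rcases le_total d a with h | h
  · rw [abs_of_nonneg (by linarith)]
    rw [show (a + d) / 2 + (a - d) / 2 = a by ring, show (a + d) / 2 - (a - d) / 2 = d by ring]
    rfl
  · rw [abs_of_nonpos (by linarith)]
    rw [show (a + d) / 2 + -((a - d) / 2) = d by ring,
      show (a + d) / 2 - -((a - d) / 2) = a by ring, pucciScalar, pucciScalar]
    ring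

theorem pucciScalar_mul_of_nonneg {c : ℝ} (hc : 0 ≤ c) (a : ℝ) :
    pucciScalar lam Lam (c * a) = c * pucciScalar lam Lam a := by
  have hmin : min (c * a) 0 = c * min a 0 := by rw [mul_min_of_nonneg _ _ hc, mul_zero]
  have hmax : max (c * a) 0 = c * max a 0 := by rw [mul_max_of_nonneg _ _ hc, mul_zero]
  rw [pucciScalar, pucciScalar, hmin, hmax]
  ring

theorem pucciScalar_ode (hlam : 0 < lam) (hLam : 0 < Lam) (v : ℝ) :
    pucciScalar lam Lam (-max v 0 - min v 0 / (Lam / lam)) = -(lam * v) := by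
  rcases le_or_gt 0 v with hv | hv
  · rw [max_eq_left hv, min_eq_right hv, zero_div, sub_zero, pucciScalar,
      min_eq_left (by linarith), max_eq_right (by linarith)]
    ring
  · have hpos : 0 < -0 - v / (Lam / lam) := by
      rw [neg_zero, zero_sub, neg_pos]; exact div_neg_of_neg_of_pos hv (by positivity)
    rw [max_eq_right hv.le, min_eq_left hv.le, pucciScalar, min_eq_right hpos.le,
      max_eq_left hpos.le]
    field_simp
    ring

end Pucci

/-- For `Λ ≥ λ > 0`, `ω = Λ/λ`, `γ > 0`, the piecewise function `u^ω_γ` extends to a `C²`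
function on `ℝ²`, periodic of period `(1+√ω)·π` in both variables, which satisfies
`M⁺(D²u^ω_γ) + λ·u^ω_γ = 0` everywhere in `ℝ²`. -/
theorem stmt12 (lam Lam om ga : ℝ) (hlam : 0 < lam) (hLam : lam ≤ Lam)
    (hom : om = Lam / lam) (hga : 0 < ga) :
    ∃ U : ℝ → ℝ → ℝ,
      ContDiff ℝ 2 (fun p : ℝ × ℝ => U p.1 p.2) ∧
      (∀ x y : ℝ, U (x + (1 + Real.sqrt om) * π) y = U x y) ∧
      (∀ x y : ℝ, U x (y + (1 + Real.sqrt om) * π) = U x y) ∧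
      (∀ x y : ℝ, |x| ≤ (1 + Real.sqrt om) * π / 2 → |y| ≤ (1 + Real.sqrt om) * π / 2 →
        U x y = uPer om ga x y) ∧
      (∀ x y : ℝ,
        pucci lam Lam (pxx U x y) (pxy U x y) (pyy U x y) + lam * U x y = 0) := by
  have hLam0 : 0 < Lam := hlam.trans_le hLam
  have hom0 : 0 < om := hom ▸ div_pos hLam0 hlam
  have hs : 0 < √om := sqrt_pos.mpr hom0
  have hs2 : √om ^ 2 = Lam / lam := by rw [sq_sqrt hom0.le, hom]
  have hdd : deriv (deriv (profile √om)) = profileDeriv2 √om := by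
    rw [funext fun t => (hasDerivAt_profile hs t).deriv]
    exact funext fun t => (hasDerivAt_profileDeriv hs t).deriv
  refine ⟨fun x y => ga * profile √om x + profile √om y, ?_, fun x y => ?_, fun x y => ?_,
    fun x y hx hy => ?_, fun x y => ?_⟩
  · have hC := contDiff_profile hs
    exact (contDiff_const.mul (hC.comp contDiff_fst)).add (hC.comp contDiff_snd)
  · simp only [periodic_profile hs x]
  · simp only [periodic_profile hs y]
  · beta_reduce
    rw [profile_of_abs_le hs hx, profile_of_abs_le hs hy, uPer]
    split_ifs <;> ring
  · rw [pxx_add_separable, pxy_add_separable, pyy_add_separable, deriv_const_mul_field',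
      deriv_const_mul_field', hdd, pucci_diagonal, pucciScalar_mul_of_nonneg hga.le,
      profileDeriv2_eq hs, profileDeriv2_eq hs, hs2, pucciScalar_ode hlam hLam0,
      pucciScalar_ode hlam hLam0]
    ring
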